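/- arXiv:1908.09690 — 2 statements merged into one kernel-verified Lean document; each statement's English description precedes it below -/
import Mathlib

section
/- Let ε, k > 0 and δ ≥ 0, and set ε' = ε/√(1+δ). Under the admissibility assumptions on u, v, w, the map t ↦ Ẽ(u + t·v; w) from ℝ to ℝ is differentiable at t = 0, and its derivative equals (1/k)∫_Ω (u−w)v dx + ∫_Ω ∇u·∇v dx + (1/ε'²)∫_Ω f(u) v dx, i.e. the Gateaux derivative of the penalized discrete energy at u in direction v coincides with the residual of the fully implicit scheme with scaled interaction length ε' = ε/√(δ+1) tested against v. -/
open MeasureTheory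

/-- The double-well potential `F(s) = (1/4)(s² − 1)²`. -/
noncomputable def dwF (s : ℝ) : ℝ := (1 / 4) * (s ^ 2 - 1) ^ 2

/-- Its derivative `f(s) = s³ − s`. -/
noncomputable def dwf (s : ℝ) : ℝ := s ^ 3 - s

/-- The Ginzburg–Landau energy `J_ε(z) = ∫_Ω ((1/2)|∇z|² + (1/ε²)F(z))`. -/
noncomputable def GLJ {d : ℕ} (Ω : Set (EuclideanSpace ℝ (Fin d))) (ε : ℝ)
    (z : EuclideanSpace ℝ (Fin d) → ℝ) : ℝ :=
  ∫ x in Ω, ((1 / 2) * ‖gradient z x‖ ^ 2 + (1 / ε ^ 2) * dwF (z x))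

/-- The discrete energy `E(z; w) = J_ε(z) + (1/(2k)) ∫_Ω (z − w)²`. -/
noncomputable def discE {d : ℕ} (Ω : Set (EuclideanSpace ℝ (Fin d))) (ε k : ℝ)
    (z w : EuclideanSpace ℝ (Fin d) → ℝ) : ℝ :=
  GLJ Ω ε z + (1 / (2 * k)) * ∫ x in Ω, (z x - w x) ^ 2

/-- The penalized discrete energy
`Ẽ(z; w) = E(z; w) + (δ/ε²)(∫_Ω F(z) − ∫_Ω F(w))`. -/
noncomputable def penE {d : ℕ} (Ω : Set (EuclideanSpace ℝ (Fin d))) (ε k δ : ℝ)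
    (z w : EuclideanSpace ℝ (Fin d) → ℝ) : ℝ :=
  discE Ω ε k z w + (δ / ε ^ 2) * ((∫ x in Ω, dwF (z x)) - ∫ x in Ω, dwF (w x))

/-!
For each `x`, every integrand of `Ẽ(u + t v; w)` is a polynomial in `t` whose coefficients are
polynomials in `u, v, w, ∇u, ∇v`; these are bounded and measurable on `Ω`, hence integrable because
`|Ω| < ∞`. So `t ↦ Ẽ(u + t v; w)` is a real polynomial of degree four, and its derivative at `0` is
its linear coefficient. The penalty only multiplies the potential term by `1 + δ`, which is the
rescaling `ε² ↦ ε'² = ε² / (1 + δ)`.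
-/

namespace MeasureTheory

variable {X : Type*} [MeasurableSpace X] {μ : Measure X}

theorem memLp_top_restrict_of_bounded {E : Type*} [NormedAddCommGroup E] {Ω : Set X}
    (hΩ : MeasurableSet Ω) {f : X → E} (hf : AEStronglyMeasurable f (μ.restrict Ω))
    (hb : ∃ C, ∀ x ∈ Ω, ‖f x‖ ≤ C) : MemLp f ⊤ (μ.restrict Ω) :=
  let ⟨C, hC⟩ := hb
  memLp_top_of_bound hf C (ae_restrict_of_forall_mem hΩ hC)

theorem MemLp.mul_top {f g : X → ℝ} (hf : MemLp f ⊤ μ) (hg : MemLp g ⊤ μ) :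
    MemLp (fun x => f x * g x) ⊤ μ :=
  hg.mul' hf

theorem MemLp.pow_top {f : X → ℝ} (hf : MemLp f ⊤ μ) (n : ℕ) :
    MemLp (fun x => f x ^ n) ⊤ μ := by
  induction n with
  | zero => simpa using memLp_top_const (μ := μ) (1 : ℝ)
  | succ n ih => simpa only [pow_succ] using ih.mul_top hf

theorem MemLp.inner_top {E : Type*} [NormedAddCommGroup E] [InnerProductSpace ℝ E]
    {f g : X → E} (hf : MemLp f ⊤ μ) (hg : MemLp g ⊤ μ) :
    MemLp (fun x => inner ℝ (f x) (g x)) ⊤ μ :=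
  hf.of_bilin (inner ℝ) 1 hg (hf.1.inner hg.1)
    (.of_forall fun x => by simpa using nnnorm_inner_le_nnnorm (f x) (g x))

theorem hasDerivAt_integral_of_eq_sum_pow {n : ℕ} {F : ℝ → X → ℝ} (a : Fin (n + 2) → X → ℝ)
    (hF : ∀ t x, F t x = ∑ i : Fin (n + 2), t ^ (i : ℕ) * a i x)
    (ha : ∀ i, Integrable (a i) μ) :
    HasDerivAt (fun t => ∫ x, F t x ∂μ) (∫ x, a 1 x ∂μ) 0 := by
  have hpoly : (fun t => ∫ x, F t x ∂μ)
      = fun t => ∑ i : Fin (n + 2), t ^ (i : ℕ) * ∫ x, a i x ∂μ := by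
    funext t
    simp_rw [hF, integral_finsetSum _ fun i _ => (ha i).const_mul _, integral_const_mul]
  rw [hpoly]
  refine (HasDerivAt.fun_sum (u := Finset.univ) fun (i : Fin (n + 2)) _ =>
    (hasDerivAt_pow (i : ℕ) (0 : ℝ)).mul_const (∫ x, a i x ∂μ)).congr_deriv ?_
  simp [Fin.sum_univ_succ]

variable [IsFiniteMeasure μ]

theorem hasDerivAt_integral_half_norm_add_smul_sq {E : Type*} [NormedAddCommGroup E]
    [InnerProductSpace ℝ E] {g h : X → E} (hg : MemLp g ⊤ μ) (hh : MemLp h ⊤ μ) :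
    HasDerivAt (fun t : ℝ => ∫ x, 1 / 2 * ‖g x + t • h x‖ ^ 2 ∂μ)
      (∫ x, inner ℝ (g x) (h x) ∂μ) 0 := by
  refine hasDerivAt_integral_of_eq_sum_pow (n := 1) ![fun x => 1 / 2 * ‖g x‖ ^ 2,
    fun x => inner ℝ (g x) (h x), fun x => 1 / 2 * ‖h x‖ ^ 2] (fun t x => ?_) ?_
  · simp only [Nat.reduceAdd, Fin.sum_univ_three, Matrix.cons_val, Fin.coe_ofNat_eq_mod,
      Nat.reduceMod]
    rw [norm_add_sq_real, norm_smul, inner_smul_right, Real.norm_eq_abs, mul_pow, sq_abs]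
    ring
  · simp only [Fin.forall_fin_succ, Matrix.cons_val_zero, Matrix.cons_val_succ,
      IsEmpty.forall_iff, and_true]
    exact ⟨((hg.norm.pow_top 2).const_mul _).integrable le_top,
      (hg.inner_top hh).integrable le_top, ((hh.norm.pow_top 2).const_mul _).integrable le_top⟩

end MeasureTheory

theorem gradient_add_const_mul {E : Type*} [NormedAddCommGroup E] [InnerProductSpace ℝ E]
    [CompleteSpace E] {u v : E → ℝ} {x : E} (hu : DifferentiableAt ℝ u x)
    (hv : DifferentiableAt ℝ v x) (t : ℝ) :
    gradient (fun y => u y + t * v y) x = gradient u x + t • gradient v x := by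
  have h : HasFDerivAt (fun y => u y + t * v y) (fderiv ℝ u x + t • fderiv ℝ v x) x :=
    hu.hasFDerivAt.add (hv.hasFDerivAt.const_mul t)
  rw [gradient, h.fderiv, map_add, map_smul]
  rfl

section

variable {X : Type*} [MeasurableSpace X] {μ : Measure X}

theorem MeasureTheory.MemLp.dwF_comp {z : X → ℝ} (hz : MemLp z ⊤ μ) :
    MemLp (fun x => dwF (z x)) ⊤ μ :=
  (((hz.pow_top 2).sub (memLp_top_const 1)).pow_top 2).const_mul _

variable [IsFiniteMeasure μ]

theorem hasDerivAt_integral_dwF_add_mul {u v : X → ℝ} (hu : MemLp u ⊤ μ) (hv : MemLp v ⊤ μ) :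
    HasDerivAt (fun t => ∫ x, dwF (u x + t * v x) ∂μ) (∫ x, dwf (u x) * v x ∂μ) 0 := by
  refine hasDerivAt_integral_of_eq_sum_pow (n := 3) ![fun x => dwF (u x),
    fun x => dwf (u x) * v x, fun x => 1 / 2 * ((3 * u x ^ 2 - 1) * v x ^ 2),
    fun x => u x * v x ^ 3, fun x => 1 / 4 * v x ^ 4] (fun t x => ?_) ?_
  · simp only [Nat.reduceAdd, Fin.sum_univ_five, Matrix.cons_val, Fin.coe_ofNat_eq_mod,
      Nat.reduceMod, dwF, dwf]
    ring
  · simp only [Fin.forall_fin_succ, Matrix.cons_val_zero, Matrix.cons_val_succ,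
      IsEmpty.forall_iff, and_true]
    exact ⟨hu.dwF_comp.integrable le_top, (((hu.pow_top 3).sub hu).mul_top hv).integrable le_top,
      (((((hu.pow_top 2).const_mul 3).sub (memLp_top_const 1)).mul_top (hv.pow_top 2)).const_mul
        _).integrable le_top,
      (hu.mul_top (hv.pow_top 3)).integrable le_top,
      ((hv.pow_top 4).const_mul _).integrable le_top⟩

theorem hasDerivAt_integral_sq_add_mul_sub {u v w : X → ℝ} (hu : MemLp u ⊤ μ)
    (hv : MemLp v ⊤ μ) (hw : MemLp w ⊤ μ) :
    HasDerivAt (fun t => ∫ x, (u x + t * v x - w x) ^ 2 ∂μ)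
      (2 * ∫ x, (u x - w x) * v x ∂μ) 0 := by
  rw [← integral_const_mul]
  refine hasDerivAt_integral_of_eq_sum_pow (n := 1) ![fun x => (u x - w x) ^ 2,
    fun x => 2 * ((u x - w x) * v x), fun x => v x ^ 2] (fun t x => ?_) ?_
  · simp only [Nat.reduceAdd, Fin.sum_univ_three, Matrix.cons_val, Fin.coe_ofNat_eq_mod,
      Nat.reduceMod]
    ring
  · simp only [Fin.forall_fin_succ, Matrix.cons_val_zero, Matrix.cons_val_succ,
      IsEmpty.forall_iff, and_true]
    exact ⟨((hu.sub hw).pow_top 2).integrable le_top,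
      (((hu.sub hw).mul_top hv).const_mul 2).integrable le_top, (hv.pow_top 2).integrable le_top⟩

end

theorem penE_eq_of_integrableOn {d : ℕ} {Ω : Set (EuclideanSpace ℝ (Fin d))} (ε k δ : ℝ)
    {z w : EuclideanSpace ℝ (Fin d) → ℝ} (hgz : IntegrableOn (fun x => ‖gradient z x‖ ^ 2) Ω)
    (hFz : IntegrableOn (fun x => dwF (z x)) Ω) :
    penE Ω ε k δ z w = (∫ x in Ω, 1 / 2 * ‖gradient z x‖ ^ 2)
      + (1 + δ) / ε ^ 2 * (∫ x in Ω, dwF (z x)) + 1 / (2 * k) * (∫ x in Ω, (z x - w x) ^ 2)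
      - δ / ε ^ 2 * ∫ x in Ω, dwF (w x) := by
  rw [penE, discE, GLJ, integral_add (hgz.const_mul _) (hFz.const_mul _), integral_const_mul,
    integral_const_mul]
  ring

theorem gateaux_derivative_of_penalized_energy_general
    (d : ℕ)
    (Ω : Set (EuclideanSpace ℝ (Fin d))) (hΩ : MeasurableSet Ω)
    (hΩfin : volume Ω < ⊤)
    (ε k δ : ℝ) (hδ : 0 ≤ δ)
    (u v w : EuclideanSpace ℝ (Fin d) → ℝ)
    (hu : Differentiable ℝ u) (hv : Differentiable ℝ v)
    (hum : Measurable u) (hvm : Measurable v) (hwm : Measurable w)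
    (hgum : Measurable fun x => gradient u x)
    (hgvm : Measurable fun x => gradient v x)
    (hub : ∃ C, ∀ x ∈ Ω, |u x| ≤ C) (hvb : ∃ C, ∀ x ∈ Ω, |v x| ≤ C)
    (hwb : ∃ C, ∀ x ∈ Ω, |w x| ≤ C)
    (hgub : ∃ C, ∀ x ∈ Ω, ‖gradient u x‖ ≤ C)
    (hgvb : ∃ C, ∀ x ∈ Ω, ‖gradient v x‖ ≤ C) :
    HasDerivAt (fun t : ℝ => penE Ω ε k δ (fun x => u x + t * v x) w)
      ((1 / k) * (∫ x in Ω, (u x - w x) * v x)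
        + (∫ x in Ω, (inner ℝ (gradient u x) (gradient v x) : ℝ))
        + (1 / (ε / Real.sqrt (1 + δ)) ^ 2) * ∫ x in Ω, dwf (u x) * v x)
      0 := by
  have : IsFiniteMeasure (volume.restrict Ω) := isFiniteMeasure_restrict.2 hΩfin.ne
  have hu' := memLp_top_restrict_of_bounded (μ := volume) hΩ hum.aestronglyMeasurable
    (by simpa only [Real.norm_eq_abs] using hub)
  have hv' := memLp_top_restrict_of_bounded (μ := volume) hΩ hvm.aestronglyMeasurable
    (by simpa only [Real.norm_eq_abs] using hvb)
  have hw' := memLp_top_restrict_of_bounded (μ := volume) hΩ hwm.aestronglyMeasurable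
    (by simpa only [Real.norm_eq_abs] using hwb)
  have hgu' := memLp_top_restrict_of_bounded (μ := volume) hΩ hgum.aestronglyMeasurable hgub
  have hgv' := memLp_top_restrict_of_bounded (μ := volume) hΩ hgvm.aestronglyMeasurable hgvb
  have hgrad (t : ℝ) :
      gradient (fun x => u x + t * v x) = fun x => gradient u x + t • gradient v x :=
    funext fun x => gradient_add_const_mul (hu x) (hv x) t
  have hsplit (t : ℝ) : penE Ω ε k δ (fun x => u x + t * v x) w
      = (∫ x in Ω, 1 / 2 * ‖gradient u x + t • gradient v x‖ ^ 2)
        + (1 + δ) / ε ^ 2 * (∫ x in Ω, dwF (u x + t * v x))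
        + 1 / (2 * k) * (∫ x in Ω, (u x + t * v x - w x) ^ 2)
        - δ / ε ^ 2 * ∫ x in Ω, dwF (w x) := by
    rw [penE_eq_of_integrableOn, hgrad]
    · rw [hgrad]
      exact ((hgu'.add (hgv'.const_smul t)).norm.pow_top 2).integrable le_top
    · exact (hu'.add (hv'.const_mul t)).dwF_comp.integrable le_top
  rw [funext hsplit]
  refine ((((hasDerivAt_integral_half_norm_add_smul_sq hgu' hgv').add
    ((hasDerivAt_integral_dwF_add_mul hu' hv').const_mul _)).add
    ((hasDerivAt_integral_sq_add_mul_sub hu' hv' hw').const_mul _)).sub_const _).congr_deriv ?_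
  rw [div_pow, Real.sq_sqrt (by linarith), one_div_div]
  ring

theorem gateaux_derivative_of_penalized_energy
    (d : ℕ) (hd : 1 ≤ d)
    (Ω : Set (EuclideanSpace ℝ (Fin d))) (hΩ : MeasurableSet Ω)
    (hΩfin : volume Ω < ⊤)
    (ε k δ : ℝ) (hε : 0 < ε) (hk : 0 < k) (hδ : 0 ≤ δ)
    (u v w : EuclideanSpace ℝ (Fin d) → ℝ)
    (hu : Differentiable ℝ u) (hv : Differentiable ℝ v)
    (hum : Measurable u) (hvm : Measurable v) (hwm : Measurable w)
    (hgum : Measurable fun x => gradient u x)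
    (hgvm : Measurable fun x => gradient v x)
    (hub : ∃ C, ∀ x ∈ Ω, |u x| ≤ C) (hvb : ∃ C, ∀ x ∈ Ω, |v x| ≤ C)
    (hwb : ∃ C, ∀ x ∈ Ω, |w x| ≤ C)
    (hgub : ∃ C, ∀ x ∈ Ω, ‖gradient u x‖ ≤ C)
    (hgvb : ∃ C, ∀ x ∈ Ω, ‖gradient v x‖ ≤ C) :
    HasDerivAt (fun t : ℝ => penE Ω ε k δ (fun x => u x + t * v x) w)
      ((1 / k) * (∫ x in Ω, (u x - w x) * v x)
        + (∫ x in Ω, (inner ℝ (gradient u x) (gradient v x) : ℝ))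
        + (1 / (ε / Real.sqrt (1 + δ)) ^ 2) * ∫ x in Ω, dwf (u x) * v x)
      0 :=
  gateaux_derivative_of_penalized_energy_general d Ω hΩ hΩfin ε k δ hδ u v w hu hv hum hvm hwm hgum
    hgvm hub hvb hwb hgub hgvb
end

section
/- Let ε, k > 0 and δ ≥ 0, set ε' = ε/√(1+δ), and let u, w be admissible (u, w differentiable with u, w, ∇u, ∇w bounded and measurable on Ω). If Ẽ(u; w) ≤ Ẽ(w; w), in particular if u minimizes z ↦ Ẽ(z; w) over a class of functions containing w, then the Ginzburg–Landau energy with scaled interaction length ε' decays with the discrete dissipation bound: J_{ε'}(u) + (1/(2k))∫_Ω (u − w)² dx ≤ J_{ε'}(w). -/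
/-! Since `(ε/√(1+δ))⁻² = (1+δ)/ε²`, rescaling the interaction length turns the penalty into part of
the energy: `J_{ε/√(1+δ)}(z) = J_ε(z) + (δ/ε²)∫_Ω F(z)` whenever both integrals exist, which
boundedness on a set of finite measure guarantees. After this rewriting, `Ẽ(u; w) ≤ Ẽ(w; w)` is
exactly the claimed inequality. -/

open MeasureTheory

lemma integrableOn_comp_of_norm_le {α E : Type*} [MeasurableSpace α] {μ : Measure α} {s : Set α}
    [NormedAddCommGroup E] [ProperSpace E] [MeasurableSpace E] [BorelSpace E]
    (hs : MeasurableSet s) (hμs : μ s < ⊤) {f : α → E} (hf : Measurable f) {C : ℝ}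
    (hC : ∀ x ∈ s, ‖f x‖ ≤ C) {g : E → ℝ} (hg : Continuous g) :
    IntegrableOn (fun x => g (f x)) s μ := by
  obtain ⟨M, hM⟩ := (isCompact_closedBall (0 : E) C).exists_bound_of_continuousOn hg.continuousOn
  refine Measure.integrableOn_of_bounded hμs.ne (hg.measurable.comp hf).aestronglyMeasurable
    (ae_restrict_of_forall_mem hs fun x hx => hM _ ?_)
  simpa using hC x hx

lemma one_div_div_sqrt_one_add_sq {ε δ : ℝ} (hδ : -1 ≤ δ) :
    1 / (ε / Real.sqrt (1 + δ)) ^ 2 = 1 / ε ^ 2 + δ / ε ^ 2 := by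
  rw [div_pow, Real.sq_sqrt (by linarith), one_div_div]
  ring

lemma GLJ_div_sqrt_one_add {d : ℕ} {Ω : Set (EuclideanSpace ℝ (Fin d))} {ε δ : ℝ}
    (hδ : -1 ≤ δ) {z : EuclideanSpace ℝ (Fin d) → ℝ}
    (hgrad : IntegrableOn (fun x => ‖gradient z x‖ ^ 2) Ω)
    (hF : IntegrableOn (fun x => dwF (z x)) Ω) :
    GLJ Ω (ε / Real.sqrt (1 + δ)) z = GLJ Ω ε z + (δ / ε ^ 2) * ∫ x in Ω, dwF (z x) := by
  have hsplit : GLJ Ω (ε / Real.sqrt (1 + δ)) z = ∫ x in Ω,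
      (((1 / 2) * ‖gradient z x‖ ^ 2 + (1 / ε ^ 2) * dwF (z x)) + (δ / ε ^ 2) * dwF (z x)) := by
    simp only [GLJ, one_div_div_sqrt_one_add_sq hδ, add_mul, add_assoc]
  have hGL : IntegrableOn (fun x => (1 / 2) * ‖gradient z x‖ ^ 2 + (1 / ε ^ 2) * dwF (z x)) Ω :=
    (hgrad.const_mul _).add (hF.const_mul _)
  rw [hsplit, integral_add hGL (hF.const_mul _), integral_const_mul, GLJ]

lemma GLJ_div_sqrt_one_add_of_bounded {d : ℕ} {Ω : Set (EuclideanSpace ℝ (Fin d))}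
    (hΩ : MeasurableSet Ω) (hΩfin : volume Ω < ⊤) {ε δ : ℝ} (hδ : -1 ≤ δ)
    {z : EuclideanSpace ℝ (Fin d) → ℝ} (hzm : Measurable z)
    (hgzm : Measurable fun x => gradient z x)
    (hzb : ∃ C, ∀ x ∈ Ω, |z x| ≤ C) (hgzb : ∃ C, ∀ x ∈ Ω, ‖gradient z x‖ ≤ C) :
    GLJ Ω (ε / Real.sqrt (1 + δ)) z = GLJ Ω ε z + (δ / ε ^ 2) * ∫ x in Ω, dwF (z x) := by
  obtain ⟨C, hC⟩ := hzb
  obtain ⟨D, hD⟩ := hgzb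
  have hdwF : Continuous dwF := by unfold dwF; fun_prop
  exact GLJ_div_sqrt_one_add hδ
    (integrableOn_comp_of_norm_le hΩ hΩfin hgzm hD (g := fun v => ‖v‖ ^ 2) (by fun_prop))
    (integrableOn_comp_of_norm_le hΩ hΩfin hzm hC hdwF)

theorem scaled_energy_decay_of_penalized_minimization_general
    (d : ℕ) (Ω : Set (EuclideanSpace ℝ (Fin d))) (hΩ : MeasurableSet Ω)
    (hΩfin : volume Ω < ⊤)
    (ε k δ : ℝ) (hδ : 0 ≤ δ)
    (u w : EuclideanSpace ℝ (Fin d) → ℝ)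
    (hum : Measurable u) (hwm : Measurable w)
    (hgum : Measurable fun x => gradient u x)
    (hgwm : Measurable fun x => gradient w x)
    (hub : ∃ C, ∀ x ∈ Ω, |u x| ≤ C) (hwb : ∃ C, ∀ x ∈ Ω, |w x| ≤ C)
    (hgub : ∃ C, ∀ x ∈ Ω, ‖gradient u x‖ ≤ C)
    (hgwb : ∃ C, ∀ x ∈ Ω, ‖gradient w x‖ ≤ C)
    (hmin : penE Ω ε k δ u w ≤ penE Ω ε k δ w w) :
    GLJ Ω (ε / Real.sqrt (1 + δ)) u + (1 / (2 * k)) * (∫ x in Ω, (u x - w x) ^ 2)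
      ≤ GLJ Ω (ε / Real.sqrt (1 + δ)) w := by
  have hδ' : -1 ≤ δ := by linarith
  rw [GLJ_div_sqrt_one_add_of_bounded hΩ hΩfin hδ' hum hgum hub hgub,
    GLJ_div_sqrt_one_add_of_bounded hΩ hΩfin hδ' hwm hgwm hwb hgwb]
  simp only [penE, discE, sub_self, ne_eq, OfNat.ofNat_ne_zero, not_false_eq_true, zero_pow,
    integral_zero, mul_zero, add_zero] at hmin
  linarith

theorem scaled_energy_decay_of_penalized_minimization
    (d : ℕ) (hd : 1 ≤ d)
    (Ω : Set (EuclideanSpace ℝ (Fin d))) (hΩ : MeasurableSet Ω)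
    (hΩfin : volume Ω < ⊤)
    (ε k δ : ℝ) (hε : 0 < ε) (hk : 0 < k) (hδ : 0 ≤ δ)
    (u w : EuclideanSpace ℝ (Fin d) → ℝ)
    (hu : Differentiable ℝ u) (hw : Differentiable ℝ w)
    (hum : Measurable u) (hwm : Measurable w)
    (hgum : Measurable fun x => gradient u x)
    (hgwm : Measurable fun x => gradient w x)
    (hub : ∃ C, ∀ x ∈ Ω, |u x| ≤ C) (hwb : ∃ C, ∀ x ∈ Ω, |w x| ≤ C)
    (hgub : ∃ C, ∀ x ∈ Ω, ‖gradient u x‖ ≤ C)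
    (hgwb : ∃ C, ∀ x ∈ Ω, ‖gradient w x‖ ≤ C)
    (hmin : penE Ω ε k δ u w ≤ penE Ω ε k δ w w) :
    GLJ Ω (ε / Real.sqrt (1 + δ)) u + (1 / (2 * k)) * (∫ x in Ω, (u x - w x) ^ 2)
      ≤ GLJ Ω (ε / Real.sqrt (1 + δ)) w :=
  scaled_energy_decay_of_penalized_minimization_general d Ω hΩ hΩfin ε k δ hδ u w hum hwm hgum hgwm
    hub hwb hgub hgwb hmin
end
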